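/- For integers K ≥ 2 and real z with 0 ≤ z ≤ eK/4, the tail sum satisfies Σ_{n=K+1}^∞ n³·J_n(z)² ≤ (K z²/2)·(e z/(2K))^{2K}. -/

import Mathlib

noncomputable def besselJ (n : ℕ) (z : ℝ) : ℝ :=
  ∑' m : ℕ, (-1 : ℝ) ^ m / (m.factorial * (m + n).factorial) * (z / 2) ^ (2 * m + n)

/-!
Expanding `cos (z cos θ)` and integrating termwise against `sin θ ^ (2n)` on `[0, π]` gives
Poisson's integral `n! (∫ sin^(2n)) J_n(z) = (z/2)^n ∫ cos (z cos θ) sin^(2n) θ dθ`, whence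
`|J_n(z)| ≤ |z/2|^n / n!`. So `n³ J_n(z)²` is dominated by `a_n = n³ ((z/2)^n / n!)²`, and for
`0 ≤ z ≤ eK/4 < n` the ratio `a_{n+1} / a_n = (n+1)(z/2)² / n³` is at most `1/2`. The tail is
therefore at most `2 a_{K+1}`, which Stirling's bound `n! ≥ √(2πn) (n/e)^n` controls: the
factor `2πK` it contributes beats `e²` as soon as `K ≥ 2`.
-/

open Real Nat intervalIntegral

theorem integral_cos_pow_add_two_mul_sin_pow (a b : ℕ) :
    (a + b + 2 : ℝ) * ∫ θ in 0..π, cos θ ^ (b + 2) * sin θ ^ a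
      = (b + 1) * ∫ θ in 0..π, cos θ ^ b * sin θ ^ a := by
  have hderiv : ∀ θ : ℝ, HasDerivAt (fun θ => cos θ ^ (b + 1) * sin θ ^ (a + 1))
      ((a + b + 2) * (cos θ ^ (b + 2) * sin θ ^ a) - (b + 1) * (cos θ ^ b * sin θ ^ a)) θ := by
    intro θ
    refine (((hasDerivAt_cos θ).fun_pow (b + 1)).fun_mul
      ((hasDerivAt_sin θ).fun_pow (a + 1))).congr_deriv ?_
    push_cast
    linear_combination -(cos θ ^ b * sin θ ^ a * ((b : ℝ) + 1)) * sin_sq_add_cos_sq θ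
  have hint (k l : ℕ) :
      IntervalIntegrable (fun θ => cos θ ^ k * sin θ ^ l) MeasureTheory.volume 0 π :=
    by apply Continuous.intervalIntegrable; fun_prop
  have := integral_eq_sub_of_hasDerivAt (fun θ _ => hderiv θ)
    (((hint _ _).const_mul _).sub ((hint _ _).const_mul _))
  rw [integral_sub ((hint _ _).const_mul _) ((hint _ _).const_mul _), integral_const_mul,
    integral_const_mul] at this
  simp only [sin_pi, sin_zero, ne_eq, Nat.add_eq_zero_iff, one_ne_zero, and_false,
    not_false_eq_true, zero_pow, mul_zero, sub_self] at this
  linarith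

theorem integral_cos_pow_two_mul_mul_sin_pow_two_mul (m n : ℕ) :
    4 ^ m * m ! * (m + n)! * ∫ θ in 0..π, cos θ ^ (2 * m) * sin θ ^ (2 * n)
      = (2 * m)! * n ! * ∫ θ in 0..π, sin θ ^ (2 * n) := by
  induction m with
  | zero => simp
  | succ m ih =>
    have hrec := integral_cos_pow_add_two_mul_sin_pow (2 * n) (2 * m)
    rw [show 2 * (m + 1) = 2 * m + 2 by ring, show m + 1 + n = m + n + 1 by ring,
      factorial_succ, factorial_succ, factorial_succ, factorial_succ]
    push_cast at hrec ⊢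
    linear_combination 4 ^ m * m ! * (m + n)! * (2 * (m : ℝ) + 2) * hrec
      + (2 * (m : ℝ) + 1) * (2 * m + 2) * ih

theorem hasSum_integral_cos_series_mul_sin_pow (n : ℕ) (z : ℝ) :
    HasSum (fun m : ℕ =>
        ∫ θ in 0..π, (-1) ^ m * (z * cos θ) ^ (2 * m) / (2 * m)! * sin θ ^ (2 * n))
      (∫ θ in 0..π, cos (z * cos θ) * sin θ ^ (2 * n)) := by
  refine hasSum_integral_of_dominated_convergence (fun m _ => |z| ^ (2 * m) / (2 * m)!)
    (fun m => (by fun_prop : Continuous _).aestronglyMeasurable) (fun m => ?_) ?_ ?_ ?_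
  · refine Filter.Eventually.of_forall fun θ _ => ?_
    rw [norm_mul, norm_div, norm_mul, norm_pow, norm_pow, norm_mul, norm_pow, norm_neg, norm_one,
      one_pow, one_mul, norm_natCast]
    have hcos : ‖cos θ‖ ≤ 1 := abs_cos_le_one θ
    have hsin : ‖sin θ‖ ^ (2 * n) ≤ 1 := pow_le_one₀ (norm_nonneg _) (abs_sin_le_one θ)
    calc (‖z‖ * ‖cos θ‖) ^ (2 * m) / (2 * m)! * ‖sin θ‖ ^ (2 * n)
        ≤ (‖z‖ * 1) ^ (2 * m) / (2 * m)! * 1 := by gcongr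
      _ = |z| ^ (2 * m) / (2 * m)! := by simp
  · exact Filter.Eventually.of_forall fun _ _ =>
      (summable_pow_div_factorial |z|).comp_injective (fun a b h => by omega)
  · exact intervalIntegrable_const
  · exact Filter.Eventually.of_forall fun θ _ => (hasSum_cos (z * cos θ)).mul_right _

theorem integral_cos_series_term_mul_sin_pow (n m : ℕ) (z : ℝ) :
    ∫ θ in 0..π, (-1) ^ m * (z * cos θ) ^ (2 * m) / (2 * m)! * sin θ ^ (2 * n)
      = n ! * (∫ θ in 0..π, sin θ ^ (2 * n))
        * ((-1) ^ m / (m ! * (m + n)!) * (z / 2) ^ (2 * m)) := by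
  have hclosed := integral_cos_pow_two_mul_mul_sin_pow_two_mul m n
  have hpow : (z / 2) ^ (2 * m) = z ^ (2 * m) / 4 ^ m := by
    rw [div_pow, pow_mul z, pow_mul (2 : ℝ)]; norm_num
  have hI : ∫ θ in 0..π, cos θ ^ (2 * m) * sin θ ^ (2 * n)
      = (2 * m)! * n ! * (∫ θ in 0..π, sin θ ^ (2 * n)) / (4 ^ m * m ! * (m + n)!) := by
    rw [eq_div_iff (by positivity), ← hclosed]; ring
  have hintegrand : (fun θ => (-1) ^ m * (z * cos θ) ^ (2 * m) / (2 * m)! * sin θ ^ (2 * n))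
      = fun θ => (-1) ^ m * z ^ (2 * m) / (2 * m)! * (cos θ ^ (2 * m) * sin θ ^ (2 * n)) := by
    funext θ; ring
  rw [hintegrand, integral_const_mul, hI, hpow]
  field_simp

theorem factorial_mul_integral_sin_pow_mul_besselJ (n : ℕ) (z : ℝ) :
    n ! * (∫ θ in 0..π, sin θ ^ (2 * n)) * besselJ n z
      = (z / 2) ^ n * ∫ θ in 0..π, cos (z * cos θ) * sin θ ^ (2 * n) := by
  set C := n ! * ∫ θ in 0..π, sin θ ^ (2 * n)
  have hC : C ≠ 0 := (mul_pos (by positivity) (integral_sin_pow_pos _)).ne'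
  have h := hasSum_integral_cos_series_mul_sin_pow n z
  simp_rw [integral_cos_series_term_mul_sin_pow] at h
  have hJ := (h.div_const C).mul_left ((z / 2) ^ n)
  have hbessel :
      besselJ n z = (z / 2) ^ n * ((∫ θ in 0..π, cos (z * cos θ) * sin θ ^ (2 * n)) / C) := by
    rw [besselJ, ← hJ.tsum_eq]
    exact tsum_congr fun m => by field_simp; ring
  rw [hbessel]
  field_simp

theorem abs_besselJ_le (n : ℕ) (z : ℝ) : |besselJ n z| ≤ |z / 2| ^ n / n ! := by
  set W := ∫ θ in 0..π, sin θ ^ (2 * n)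
  have hW : 0 < W := integral_sin_pow_pos _
  have hC : 0 < n ! * W := by positivity
  have hI : |∫ θ in 0..π, cos (z * cos θ) * sin θ ^ (2 * n)| ≤ W := by
    refine (abs_integral_le_integral_abs pi_pos.le).trans
      (integral_mono_on pi_pos.le (by apply Continuous.intervalIntegrable; fun_prop)
        (by apply Continuous.intervalIntegrable; fun_prop) fun θ _ => ?_)
    rw [abs_mul, abs_pow, (even_two_mul n).pow_abs]
    exact mul_le_of_le_one_left ((even_two_mul n).pow_nonneg _) (abs_cos_le_one _)
  have hJ : besselJ n z
      = (z / 2) ^ n * (∫ θ in 0..π, cos (z * cos θ) * sin θ ^ (2 * n)) / (n ! * W) := by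
    rw [eq_div_iff hC.ne', ← factorial_mul_integral_sin_pow_mul_besselJ]; ring
  rw [hJ, abs_div, abs_mul, abs_pow, abs_of_pos hC]
  calc |z / 2| ^ n * |∫ θ in 0..π, cos (z * cos θ) * sin θ ^ (2 * n)| / (n ! * W)
      ≤ |z / 2| ^ n * W / (n ! * W) := by gcongr
    _ = |z / 2| ^ n / n ! := by field_simp

theorem two_pi_mul_pow_le_exp_pow_mul_factorial_sq (n : ℕ) :
    2 * π * n * n ^ (2 * n) ≤ exp 1 ^ (2 * n) * (n ! : ℝ) ^ 2 := by
  have h := pow_le_pow_left₀ (by positivity) (Stirling.le_factorial_stirling n) 2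
  rw [mul_pow, sq_sqrt (by positivity), ← pow_mul, div_pow, mul_comm n 2] at h
  rwa [mul_div_assoc', div_le_iff₀ (by positivity), mul_comm _ (exp 1 ^ _)] at h

theorem succ_pow_three_mul_pow_le_exp_pow_mul_factorial_sq (K : ℕ) (hK : 2 ≤ K) :
    ((K : ℝ) + 1) ^ 3 * K ^ (2 * K) ≤ K * exp 1 ^ (2 * K) * ((K + 1)! : ℝ) ^ 2 := by
  have hstirling := two_pi_mul_pow_le_exp_pow_mul_factorial_sq (K + 1)
  have he : exp 1 ^ 2 ≤ 2 * π * K := by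
    have : (2 : ℝ) ≤ K := by exact_mod_cast hK
    nlinarith [exp_one_lt_d9, exp_pos 1, pi_gt_three]
  push_cast at hstirling
  rw [show 2 * (K + 1) = 2 * K + 2 by ring, pow_add, pow_add] at hstirling
  refine le_of_mul_le_mul_left ?_ (by positivity : 0 < exp 1 ^ 2)
  calc exp 1 ^ 2 * (((K : ℝ) + 1) ^ 3 * K ^ (2 * K))
      ≤ 2 * π * K * (((K : ℝ) + 1) ^ 3 * ((K : ℝ) + 1) ^ (2 * K)) := by gcongr; linarith
    _ = K * (2 * π * (K + 1) * (((K : ℝ) + 1) ^ (2 * K) * ((K : ℝ) + 1) ^ 2)) := by ring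
    _ ≤ K * (exp 1 ^ (2 * K) * exp 1 ^ 2 * ((K + 1)! : ℝ) ^ 2) := by gcongr
    _ = exp 1 ^ 2 * (K * exp 1 ^ (2 * K) * ((K + 1)! : ℝ) ^ 2) := by ring

noncomputable def besselMajorant (z : ℝ) (n : ℕ) : ℝ := n ^ 3 * ((z / 2) ^ n / n !) ^ 2

theorem pow_three_mul_besselJ_sq_le (n : ℕ) (z : ℝ) :
    (n : ℝ) ^ 3 * besselJ n z ^ 2 ≤ besselMajorant z n := by
  have h := abs_besselJ_le n z
  rw [← abs_pow, ← Nat.abs_cast (n !), ← abs_div] at h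
  have hsq := sq_le_sq' (abs_le.mp h).1 (abs_le.mp h).2
  rw [sq_abs] at hsq
  exact mul_le_mul_of_nonneg_left hsq (by positivity)

theorem besselMajorant_succ_le (n : ℕ) (hn : 1 ≤ n) (z : ℝ) (hz : |z| ≤ n) :
    besselMajorant z (n + 1) ≤ 1 / 2 * besselMajorant z n := by
  have hn' : (1 : ℝ) ≤ n := by exact_mod_cast hn
  have hz2 : z ^ 2 ≤ (n : ℝ) ^ 2 := sq_le_sq' (abs_le.mp hz).1 (abs_le.mp hz).2
  have hratio : ((n : ℝ) + 1) * (z / 2) ^ 2 ≤ 1 / 2 * n ^ 3 := by nlinarith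
  have hsucc :
      besselMajorant z (n + 1) = ((n : ℝ) + 1) * (z / 2) ^ 2 * ((z / 2) ^ n / n !) ^ 2 := by
    unfold besselMajorant
    rw [factorial_succ]
    push_cast
    field_simp
    ring
  rw [hsucc, besselMajorant, ← mul_assoc]
  gcongr

theorem two_mul_besselMajorant_le (K : ℕ) (hK : 2 ≤ K) (z : ℝ) :
    2 * besselMajorant z (K + 1) ≤ (K * z ^ 2 / 2) * (exp 1 * z / (2 * K)) ^ (2 * K) := by
  have hw : 0 ≤ (z / 2) ^ (2 * K + 2) := Even.pow_nonneg ⟨K + 1, by ring⟩ _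
  have hL : 2 * besselMajorant z (K + 1)
      = (z / 2) ^ (2 * K + 2) * (2 * ((K : ℝ) + 1) ^ 3 / ((K + 1)! : ℝ) ^ 2) := by
    unfold besselMajorant; push_cast; rw [div_pow, ← pow_mul]; ring
  have hR : (K * z ^ 2 / 2) * (exp 1 * z / (2 * K)) ^ (2 * K)
      = (z / 2) ^ (2 * K + 2) * (2 * K * exp 1 ^ (2 * K) / (K : ℝ) ^ (2 * K)) := by
    rw [div_pow, div_pow, mul_pow, mul_pow]
    field_simp
    ring
  rw [hL, hR]
  gcongr (z / 2) ^ (2 * K + 2) * ?_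
  rw [div_le_div_iff₀ (by positivity) (by positivity)]
  nlinarith [succ_pow_three_mul_pow_le_exp_pow_mul_factorial_sq K hK]

theorem besselJ_tail_sum_upper (K : ℕ) (hK : 2 ≤ K) (z : ℝ) (hz0 : 0 ≤ z)
    (hz : z ≤ Real.exp 1 * K / 4) :
    ∑' n : ℕ, ((n + K + 1 : ℕ) : ℝ) ^ 3 * besselJ (n + K + 1) z ^ 2
      ≤ (K * z ^ 2 / 2) * (Real.exp 1 * z / (2 * K)) ^ (2 * K) := by
  have hzK : |z| ≤ K + 1 := by
    rw [abs_of_nonneg hz0]; nlinarith [exp_one_lt_d9, (by positivity : (0 : ℝ) ≤ K)]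
  have hdecay (j : ℕ) : besselMajorant z (K + 1 + j) ≤ (1 / 2) ^ j * besselMajorant z (K + 1) :=
    le_geom (u := fun j => besselMajorant z (K + 1 + j)) (by norm_num) j fun k _ =>
      besselMajorant_succ_le (K + 1 + k) (by omega) z (by push_cast; linarith)
  have hterm (j : ℕ) : ((j + K + 1 : ℕ) : ℝ) ^ 3 * besselJ (j + K + 1) z ^ 2
      ≤ (1 / 2) ^ j * besselMajorant z (K + 1) := by
    rw [show j + K + 1 = K + 1 + j by omega]
    exact (pow_three_mul_besselJ_sq_le _ z).trans (hdecay j)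
  have hgeom := summable_geometric_two.mul_right (besselMajorant z (K + 1))
  calc ∑' n : ℕ, ((n + K + 1 : ℕ) : ℝ) ^ 3 * besselJ (n + K + 1) z ^ 2
      ≤ ∑' j : ℕ, (1 / 2) ^ j * besselMajorant z (K + 1) :=
        (hgeom.of_nonneg_of_le (fun _ => by positivity) hterm).tsum_le_tsum hterm hgeom
    _ = 2 * besselMajorant z (K + 1) := by rw [tsum_mul_right, tsum_geometric_two]
    _ ≤ _ := two_mul_besselMajorant_le K hK z
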